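/- arXiv:math/0309098 — 3 statements merged into one kernel-verified Lean document; each statement's English description precedes it below -/
import Mathlib

section
/- Let m ∈ {1, −1} be fixed, and suppose that for each ε in an open interval around 0 we are given: a continuous 1-periodic function u_ε : ℝ → ℂ, a real number λ_ε, and continuously differentiable functions f_{1,ε}, f_{2,ε} : ℝ → ℂ satisfying the Zakharov–Shabat system f_{1,ε}'(x) − u_ε(x)·f_{2,ε}(x) = −iλ_ε·f_{1,ε}(x), f_{2,ε}'(x) − conj(u_ε(x))·f_{1,ε}(x) = iλ_ε·f_{2,ε}(x), the quasiperiodicity f_{j,ε}(x+1) = m·f_{j,ε}(x) for j = 1,2, the symmetry f_{2,ε}(x) = conj(f_{1,ε}(x)), and the normalization ∫₀¹ |f_{1,ε}(x)|² dx = 1. Assume the maps ε ↦ u_ε and ε ↦ f_{j,ε} (j = 1,2) are differentiable at ε = 0 as maps into the space of continuous functions on ℝ with the supremum norm on [0,1], with derivatives u̇ and ḟ_j, and that ε ↦ λ_ε is differentiable at ε = 0. Then the derivative of λ_ε at ε = 0 equals Re ∫₀¹ conj(u̇(x)) · i·f_{1,0}(x)² dx; that is, the gradient of the eigenvalue λ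 with respect to conj(u) is i·f₁². -/
/-- Differentiability at `ε = 0` of a family of functions, in the sense of the
supremum norm on `[0,1]`: the first-order Taylor remainder is `o(ε)` uniformly
on `[0,1]`. -/
def HasSupNormDerivOnIccAtZero (F : ℝ → ℝ → ℂ) (Fdot : ℝ → ℂ) : Prop :=
  Filter.Tendsto
    (fun ε : ℝ => (⨆ x : Set.Icc (0:ℝ) 1, ‖F ε x - F 0 x - ε • Fdot x‖) / |ε|)
    (nhdsWithin 0 {0}ᶜ) (nhds 0)

/-!
For solutions `f`, `g` of the Zakharov–Shabat system with potentials `u`, `v` and spectral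
parameters `λ`, `μ`, the Wronskian `f₁ g₂ - f₂ g₁` has derivative
`(u - v) f₂ g₂ - conj (u - v) f₁ g₁ + i (μ - λ) (f₁ g₂ + f₂ g₁)`. When both solutions are
`m`-quasiperiodic with `m² = 1` the Wronskian is `1`-periodic, so this derivative integrates to
zero over `[0, 1]`. Taking the solutions at `ε` and at `0` and dividing by `ε`, the identity
passes to the limit `ε → 0` because every family involved converges uniformly on `[0, 1]`.
With `f₂ = conj f₁` and `∫ |f₁|² = 1` the limit reads `conj w - w = 2 i λ̇` for
`w = ∫ conj u̇ · f₁²`, that is `λ̇ = Re (i w)`.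
-/

open Filter Set Topology Complex ComplexConjugate

section UniformConvergence

variable {ι α R : Type*} {p : Filter ι} {s : Set α}

theorem tendstoUniformlyOn_iff_tendsto_sub [UniformSpace R] [AddGroup R] [IsUniformAddGroup R]
    {F : ι → α → R} {f : α → R} :
    TendstoUniformlyOn F f p s ↔
      Tendsto (fun q : ι × α => F q.1 q.2 - f q.2) (p ×ˢ 𝓟 s) (𝓝 0) := by
  rw [tendstoUniformlyOn_iff_tendsto, uniformity_eq_comap_nhds_zero R, tendsto_comap_iff]
  rfl

theorem TendstoUniformlyOn.mul_of_isBoundedUnder [SeminormedRing R] {F G : ι → α → R}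
    {f g : α → R} (hF : TendstoUniformlyOn F f p s) (hG : TendstoUniformlyOn G g p s)
    (hf : IsBoundedUnder (· ≤ ·) (𝓟 s) (‖f ·‖)) (hg : IsBoundedUnder (· ≤ ·) (𝓟 s) (‖g ·‖)) :
    TendstoUniformlyOn (fun i x => F i x * G i x) (fun x => f x * g x) p s := by
  rw [tendstoUniformlyOn_iff_tendsto_sub] at hF hG ⊢
  have hf' := (tendsto_snd (f := p)).isBoundedUnder_comp hf
  have hg' := (tendsto_snd (f := p)).isBoundedUnder_comp hg
  -- `F G - f g = (F - f) (G - g) + (F - f) g + f (G - g)`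
  have hsum := ((hF.mul hG).add (hF.zero_mul_isBoundedUnder_le hg')).add
    (isBoundedUnder_le_mul_tendsto_zero hf' hG)
  simp only [mul_zero, add_zero] at hsum
  refine hsum.congr fun q => ?_
  noncomm_ring

theorem IsCompact.isBoundedUnder_norm {E : Type*} [TopologicalSpace α] [SeminormedAddGroup E]
    {K : Set α} {f : α → E} (hK : IsCompact K) (hf : ContinuousOn f K) :
    IsBoundedUnder (· ≤ ·) (𝓟 K) (‖f ·‖) :=
  let ⟨C, hC⟩ := hK.exists_bound_of_continuousOn hf
  ⟨C, eventually_principal.2 hC⟩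

theorem TendstoUniformlyOn.mul_of_continuousOn [TopologicalSpace α] [SeminormedRing R]
    {F G : ι → α → R} {f g : α → R} (hs : IsCompact s) (hF : TendstoUniformlyOn F f p s)
    (hG : TendstoUniformlyOn G g p s) (hf : ContinuousOn f s) (hg : ContinuousOn g s) :
    TendstoUniformlyOn (fun i x => F i x * G i x) (fun x => f x * g x) p s :=
  hF.mul_of_isBoundedUnder hG (hs.isBoundedUnder_norm hf) (hs.isBoundedUnder_norm hg)

theorem tendstoUniformlyOn_const_self [UniformSpace R] (f : α → R) :
    TendstoUniformlyOn (fun _ : ι => f) f p s :=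
  fun _ hu => Eventually.of_forall fun _ _ _ => refl_mem_uniformity hu

end UniformConvergence

namespace HasSupNormDerivOnIccAtZero

variable {F : ℝ → ℝ → ℂ} {Fd : ℝ → ℂ}

theorem tendstoUniformlyOn_slope (h : HasSupNormDerivOnIccAtZero F Fd)
    (hF : ∀ᶠ ε in 𝓝 0, ContinuousOn (F ε) (Icc 0 1)) (hFd : ContinuousOn Fd (Icc 0 1)) :
    TendstoUniformlyOn (fun ε x => (F ε x - F 0 x) / ε) Fd (𝓝[≠] 0) (Icc 0 1) := by
  rw [tendstoUniformlyOn_iff_tendsto_sub]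
  refine squeeze_zero_norm' ?_ (h.comp tendsto_fst)
  rw [eventually_prod_principal_iff]
  filter_upwards [self_mem_nhdsWithin, eventually_nhdsWithin_of_eventually_nhds hF]
    with ε (hε : ε ≠ 0) hFε x hx
  have hbdd : BddAbove (range fun y : Icc (0:ℝ) 1 => ‖F ε y - F 0 y - ε • Fd y‖) :=
    (isCompact_range
      ((hFε.sub hF.self_of_nhds).sub (hFd.const_smul ε)).norm.domRestrict).bddAbove
  have hεC : (ε : ℂ) ≠ 0 := by exact_mod_cast hε
  calc ‖(F ε x - F 0 x) / ε - Fd x‖ = ‖F ε x - F 0 x - ε • Fd x‖ / |ε| := by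
        rw [← Real.norm_eq_abs, ← norm_real, ← norm_div, real_smul]
        congr 1
        field_simp
    _ ≤ _ := div_le_div_of_nonneg_right (le_ciSup hbdd ⟨x, hx⟩) (abs_nonneg ε)

theorem tendstoUniformlyOn (h : HasSupNormDerivOnIccAtZero F Fd)
    (hF : ∀ᶠ ε in 𝓝 0, ContinuousOn (F ε) (Icc 0 1)) (hFd : ContinuousOn Fd (Icc 0 1)) :
    TendstoUniformlyOn F (F 0) (𝓝[≠] 0) (Icc 0 1) := by
  have hε : Tendsto (fun ε : ℝ => (ε : ℂ)) (𝓝[≠] 0) (𝓝 0) :=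
    continuous_ofReal.tendsto' 0 0 ofReal_zero |>.mono_left nhdsWithin_le_nhds
  have hprod := (hε.tendstoUniformlyOn_const (Icc 0 1)).mul_of_isBoundedUnder
    (h.tendstoUniformlyOn_slope hF hFd) (by simp [isBoundedUnder_const])
    (isCompact_Icc.isBoundedUnder_norm hFd)
  rw [tendstoUniformlyOn_iff_tendsto_sub] at hprod ⊢
  refine hprod.congr' (eventually_prod_principal_iff.2 ?_)
  filter_upwards [self_mem_nhdsWithin] with ε (hε : ε ≠ 0) x _
  have hεC : (ε : ℂ) ≠ 0 := by exact_mod_cast hε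
  field_simp
  ring

end HasSupNormDerivOnIccAtZero

section IntegralLimits

variable {u f₁ f₂ : ℝ → ℝ → ℂ} {udot : ℝ → ℂ}

theorem tendsto_integral_mul_add_mul (hf₁c : ∀ᶠ ε in 𝓝 0, Continuous (f₁ ε))
    (hf₂c : ∀ᶠ ε in 𝓝 0, Continuous (f₂ ε))
    (hf₁ : TendstoUniformlyOn f₁ (f₁ 0) (𝓝[≠] 0) (Icc 0 1))
    (hf₂ : TendstoUniformlyOn f₂ (f₂ 0) (𝓝[≠] 0) (Icc 0 1)) :
    Tendsto (fun ε => ∫ x in (0:ℝ)..1, (f₁ ε x * f₂ 0 x + f₂ ε x * f₁ 0 x)) (𝓝[≠] 0)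
      (𝓝 (∫ x in (0:ℝ)..1, (f₁ 0 x * f₂ 0 x + f₂ 0 x * f₁ 0 x))) := by
  have h₁ := hf₁c.self_of_nhds
  have h₂ := hf₂c.self_of_nhds
  have hP := (hf₁.mul_of_continuousOn isCompact_Icc (tendstoUniformlyOn_const_self (f₂ 0))
      (by fun_prop) (by fun_prop)).add
    (hf₂.mul_of_continuousOn isCompact_Icc (tendstoUniformlyOn_const_self (f₁ 0))
      (by fun_prop) (by fun_prop))
  rw [← uIcc_of_le zero_le_one] at hP
  refine hP.tendsto_intervalIntegral_of_continuousOn ?_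
  filter_upwards [eventually_nhdsWithin_of_eventually_nhds (hf₁c.and hf₂c)] with ε ⟨_, _⟩
  simp only [Pi.add_def]
  fun_prop

theorem tendsto_integral_slope_mul_mul (huc : ∀ᶠ ε in 𝓝 0, Continuous (u ε))
    (hf₁c : ∀ᶠ ε in 𝓝 0, Continuous (f₁ ε)) (hf₂c : ∀ᶠ ε in 𝓝 0, Continuous (f₂ ε))
    (hudot : TendstoUniformlyOn (fun ε x => (u ε x - u 0 x) / ε) udot (𝓝[≠] 0) (Icc 0 1))
    (hf₁ : TendstoUniformlyOn f₁ (f₁ 0) (𝓝[≠] 0) (Icc 0 1))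
    (hf₂ : TendstoUniformlyOn f₂ (f₂ 0) (𝓝[≠] 0) (Icc 0 1)) :
    Tendsto (fun ε : ℝ => ∫ x in (0:ℝ)..1, ((u ε x - u 0 x) / ε * f₂ ε x * f₂ 0 x
        - conj ((u ε x - u 0 x) / ε) * f₁ ε x * f₁ 0 x)) (𝓝[≠] 0)
      (𝓝 (∫ x in (0:ℝ)..1, (udot x * f₂ 0 x * f₂ 0 x - conj (udot x) * f₁ 0 x * f₁ 0 x))) := by
  have hu₀ := huc.self_of_nhds
  have h₁ := hf₁c.self_of_nhds
  have h₂ := hf₂c.self_of_nhds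
  have hc := eventually_nhdsWithin_of_eventually_nhds (s := {0}ᶜ) (huc.and (hf₁c.and hf₂c))
  have hudotc : ContinuousOn udot (Icc 0 1) :=
    hudot.continuousOn (hc.mono fun ε ⟨hε, _⟩ => by fun_prop).frequently
  have hΦ₁ := (hudot.mul_of_continuousOn isCompact_Icc hf₂ hudotc (by fun_prop)).mul_of_continuousOn
    isCompact_Icc (tendstoUniformlyOn_const_self (f₂ 0)) (by fun_prop) (by fun_prop)
  have hΦ₂ := ((isometry_conj.uniformContinuous.comp_tendstoUniformlyOn hudot).mul_of_continuousOn
    isCompact_Icc hf₁ (by fun_prop) (by fun_prop)).mul_of_continuousOn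
    isCompact_Icc (tendstoUniformlyOn_const_self (f₁ 0)) (by fun_prop) (by fun_prop)
  have hΦ := hΦ₁.sub hΦ₂
  rw [← uIcc_of_le zero_le_one] at hΦ
  refine hΦ.tendsto_intervalIntegral_of_continuousOn ?_
  filter_upwards [hc] with ε ⟨_, _, _⟩
  simp only [Pi.sub_def, Function.comp_def]
  fun_prop

end IntegralLimits

namespace ZakharovShabat

def IsSolution (u : ℝ → ℂ) (μ : ℂ) (f₁ f₂ : ℝ → ℂ) : Prop :=
  ∀ x, HasDerivAt f₁ (u x * f₂ x - I * μ * f₁ x) x ∧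
    HasDerivAt f₂ (conj (u x) * f₁ x + I * μ * f₂ x) x

variable {u v : ℝ → ℂ} {μ ν : ℂ} {f₁ f₂ g₁ g₂ : ℝ → ℂ}

theorem isSolution_of_deriv (hf₁ : Differentiable ℝ f₁) (hf₂ : Differentiable ℝ f₂)
    (h₁ : ∀ x, deriv f₁ x - u x * f₂ x = -I * μ * f₁ x)
    (h₂ : ∀ x, deriv f₂ x - conj (u x) * f₁ x = I * μ * f₂ x) :
    IsSolution u μ f₁ f₂ := fun x =>
  ⟨(hf₁ x).hasDerivAt.congr_deriv (by linear_combination h₁ x),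
    (hf₂ x).hasDerivAt.congr_deriv (by linear_combination h₂ x)⟩

namespace IsSolution

theorem continuous_fst (hf : IsSolution u μ f₁ f₂) : Continuous f₁ :=
  continuous_iff_continuousAt.2 fun x => (hf x).1.continuousAt

theorem continuous_snd (hf : IsSolution u μ f₁ f₂) : Continuous f₂ :=
  continuous_iff_continuousAt.2 fun x => (hf x).2.continuousAt

theorem hasDerivAt_wronskian (hf : IsSolution u μ f₁ f₂) (hg : IsSolution v ν g₁ g₂) (x : ℝ) :
    HasDerivAt (fun y => f₁ y * g₂ y - f₂ y * g₁ y)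
      ((u x - v x) * f₂ x * g₂ x - conj (u x - v x) * f₁ x * g₁ x
        + I * (ν - μ) * (f₁ x * g₂ x + f₂ x * g₁ x)) x := by
  refine (((hf x).1.mul (hg x).2).sub ((hf x).2.mul (hg x).1)).congr_deriv ?_
  simp only [map_sub]
  ring

theorem integral_eq (hf : IsSolution u μ f₁ f₂) (hg : IsSolution v ν g₁ g₂)
    (hu : Continuous u) (hv : Continuous v) {m : ℂ} (hm : m * m = 1)
    (hf₁ : f₁ 1 = m * f₁ 0) (hf₂ : f₂ 1 = m * f₂ 0) (hg₁ : g₁ 1 = m * g₁ 0)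
    (hg₂ : g₂ 1 = m * g₂ 0) :
    ∫ x in (0:ℝ)..1, ((u x - v x) * f₂ x * g₂ x - conj (u x - v x) * f₁ x * g₁ x)
      = I * (μ - ν) * ∫ x in (0:ℝ)..1, (f₁ x * g₂ x + f₂ x * g₁ x) := by
  have hf₁c := hf.continuous_fst
  have hf₂c := hf.continuous_snd
  have hg₁c := hg.continuous_fst
  have hg₂c := hg.continuous_snd
  have hftc := intervalIntegral.integral_eq_sub_of_hasDerivAt (a := 0) (b := 1)
    (fun x _ => hf.hasDerivAt_wronskian hg x) (by apply Continuous.intervalIntegrable; fun_prop)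
  rw [intervalIntegral.integral_add (by apply Continuous.intervalIntegrable; fun_prop)
    (by apply Continuous.intervalIntegrable; fun_prop), intervalIntegral.integral_const_mul,
    hf₁, hf₂, hg₁, hg₂] at hftc
  linear_combination hftc + (f₁ 0 * g₂ 0 - f₂ 0 * g₁ 0) * hm

end IsSolution

theorem integral_first_variation {u f₁ f₂ : ℝ → ℝ → ℂ} {μ : ℝ → ℂ} {μ' : ℂ} {udot : ℝ → ℂ}
    {m : ℂ} (hsol : ∀ᶠ ε in 𝓝 0, IsSolution (u ε) (μ ε) (f₁ ε) (f₂ ε))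
    (hu : ∀ᶠ ε in 𝓝 0, Continuous (u ε)) (hm : m * m = 1)
    (hqp : ∀ᶠ ε in 𝓝 0, f₁ ε 1 = m * f₁ ε 0 ∧ f₂ ε 1 = m * f₂ ε 0)
    (hudot : TendstoUniformlyOn (fun ε x => (u ε x - u 0 x) / ε) udot (𝓝[≠] 0) (Icc 0 1))
    (hf₁ : TendstoUniformlyOn f₁ (f₁ 0) (𝓝[≠] 0) (Icc 0 1))
    (hf₂ : TendstoUniformlyOn f₂ (f₂ 0) (𝓝[≠] 0) (Icc 0 1)) (hμ : HasDerivAt μ μ' 0) :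
    ∫ x in (0:ℝ)..1, (udot x * f₂ 0 x * f₂ 0 x - conj (udot x) * f₁ 0 x * f₁ 0 x)
      = I * μ' * ∫ x in (0:ℝ)..1, (f₁ 0 x * f₂ 0 x + f₂ 0 x * f₁ 0 x) := by
  obtain ⟨hsol₀, hu₀, hqp₀⟩ := (hsol.and (hu.and hqp)).self_of_nhds
  have hquot : ∀ᶠ ε in 𝓝[≠] 0,
      ∫ x in (0:ℝ)..1, ((u ε x - u 0 x) / ε * f₂ ε x * f₂ 0 x
          - conj ((u ε x - u 0 x) / ε) * f₁ ε x * f₁ 0 x)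
        = I * ((μ ε - μ 0) / ε) * ∫ x in (0:ℝ)..1, (f₁ ε x * f₂ 0 x + f₂ ε x * f₁ 0 x) := by
    filter_upwards [eventually_nhdsWithin_of_eventually_nhds (hsol.and (hu.and hqp))]
      with ε ⟨hsolε, huε, hqpε⟩
    have key := hsolε.integral_eq hsol₀ huε hu₀ hm hqpε.1 hqpε.2 hqp₀.1 hqp₀.2
    rw [mul_div_assoc', div_mul_eq_mul_div, ← key, ← intervalIntegral.integral_div]
    congr 1 with x
    rw [map_div₀, conj_ofReal]
    ring
  have hslope : Tendsto (fun ε : ℝ => (μ ε - μ 0) / ε) (𝓝[≠] 0) (𝓝 μ') := by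
    refine hμ.tendsto_slope.congr fun ε => ?_
    simp [slope_def_module, div_eq_inv_mul, real_smul]
  have hf₁c := hsol.mono fun _ h => h.continuous_fst
  have hf₂c := hsol.mono fun _ h => h.continuous_snd
  exact tendsto_nhds_unique
    ((tendsto_integral_slope_mul_mul hu hf₁c hf₂c hudot hf₁ hf₂).congr' hquot)
    ((tendsto_const_nhds.mul hslope).mul (tendsto_integral_mul_add_mul hf₁c hf₂c hf₁ hf₂))

theorem eq_re_integral_of_symmetric_variation {g udot : ℝ → ℂ} (hg : Continuous g)
    (hudot : Continuous udot) (hnorm : ∫ x in (0:ℝ)..1, ‖g x‖ ^ 2 = 1) {l : ℝ}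
    (h : ∫ x in (0:ℝ)..1, (udot x * conj (g x) * conj (g x) - conj (udot x) * g x * g x)
      = I * l * ∫ x in (0:ℝ)..1, (g x * conj (g x) + conj (g x) * g x)) :
    l = (∫ x in (0:ℝ)..1, conj (udot x) * (I * g x ^ 2)).re := by
  set w := ∫ x in (0:ℝ)..1, conj (udot x) * g x * g x
  have hpair : ∫ x in (0:ℝ)..1, (g x * conj (g x) + conj (g x) * g x) = 2 := by
    have hpt : ∀ x, g x * conj (g x) + conj (g x) * g x = ((2 * ‖g x‖ ^ 2 : ℝ) : ℂ) := by
      intro x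
      rw [mul_comm (conj _), mul_conj, normSq_eq_norm_sq]
      push_cast
      ring
    simp_rw [hpt]
    rw [intervalIntegral.integral_ofReal, intervalIntegral.integral_const_mul, hnorm]
    norm_num
  have hform : ∫ x in (0:ℝ)..1, (udot x * conj (g x) * conj (g x) - conj (udot x) * g x * g x)
      = conj w - w := by
    rw [intervalIntegral.integral_sub (by apply Continuous.intervalIntegrable; fun_prop)
      (by apply Continuous.intervalIntegrable; fun_prop), ← intervalIntegral.intervalIntegral_conj]
    simp only [map_mul, conj_conj]
    rfl
  have hI : ∫ x in (0:ℝ)..1, conj (udot x) * (I * g x ^ 2) = I * w := by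
    rw [← intervalIntegral.integral_const_mul]
    congr 1 with x
    ring
  rw [hpair, hform] at h
  rw [hI]
  have him := congrArg im h
  simp only [sub_im, conj_im, mul_im, mul_re, I_re, ofReal_re, zero_mul, I_im, ofReal_im,
    mul_zero, sub_self, im_ofNat, one_mul, zero_add, re_ofNat] at him
  simp only [mul_re, I_re, zero_mul, I_im, one_mul, zero_sub]
  linarith

end ZakharovShabat

open ZakharovShabat in
theorem zakharov_shabat_eigenvalue_gradient_general
    (m : ℂ) (hm : m = 1 ∨ m = -1) (δ : ℝ) (hδ : 0 < δ)
    (u : ℝ → ℝ → ℂ) (lam : ℝ → ℝ) (f₁ f₂ : ℝ → ℝ → ℂ)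
    (hu : ∀ ε ∈ Set.Ioo (-δ) δ, Continuous (u ε) ∧ Function.Periodic (u ε) 1)
    (hf : ∀ ε ∈ Set.Ioo (-δ) δ, ContDiff ℝ 1 (f₁ ε) ∧ ContDiff ℝ 1 (f₂ ε))
    (hode₁ : ∀ ε ∈ Set.Ioo (-δ) δ, ∀ x,
      deriv (f₁ ε) x - u ε x * f₂ ε x = -Complex.I * (lam ε : ℂ) * f₁ ε x)
    (hode₂ : ∀ ε ∈ Set.Ioo (-δ) δ, ∀ x,
      deriv (f₂ ε) x - (starRingEnd ℂ) (u ε x) * f₁ ε x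
        = Complex.I * (lam ε : ℂ) * f₂ ε x)
    (hqp : ∀ ε ∈ Set.Ioo (-δ) δ, ∀ x,
      f₁ ε (x + 1) = m * f₁ ε x ∧ f₂ ε (x + 1) = m * f₂ ε x)
    (hsym : ∀ ε ∈ Set.Ioo (-δ) δ, ∀ x, f₂ ε x = (starRingEnd ℂ) (f₁ ε x))
    (hnorm : ∀ ε ∈ Set.Ioo (-δ) δ, (∫ x in (0:ℝ)..1, ‖f₁ ε x‖ ^ 2) = 1)
    (udot f₁dot : ℝ → ℂ)
    (hudot : Continuous udot) (hf₁dot : Continuous f₁dot)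
    (hudiff : HasSupNormDerivOnIccAtZero u udot)
    (hf₁diff : HasSupNormDerivOnIccAtZero f₁ f₁dot)
    (hlam : DifferentiableAt ℝ lam 0) :
    deriv lam 0
      = (∫ x in (0:ℝ)..1,
          (starRingEnd ℂ) (udot x) * (Complex.I * (f₁ 0 x) ^ 2)).re := by
  have hε : ∀ᶠ ε in 𝓝 (0:ℝ), ε ∈ Ioo (-δ) δ := Ioo_mem_nhds (by linarith) hδ
  have h₀ : (0:ℝ) ∈ Ioo (-δ) δ := hε.self_of_nhds
  have hsol : ∀ᶠ ε in 𝓝 0, IsSolution (u ε) (lam ε) (f₁ ε) (f₂ ε) := hε.mono fun ε hε =>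
    isSolution_of_deriv ((hf ε hε).1.differentiable one_ne_zero)
      ((hf ε hε).2.differentiable one_ne_zero) (hode₁ ε hε) (hode₂ ε hε)
  have hf₁u := hf₁diff.tendstoUniformlyOn
    (hsol.mono fun _ h => h.continuous_fst.continuousOn) hf₁dot.continuousOn
  have hf₂u : TendstoUniformlyOn f₂ (f₂ 0) (𝓝[≠] 0) (Icc 0 1) :=
    ((isometry_conj.uniformContinuous.comp_tendstoUniformlyOn hf₁u).congr
      ((eventually_nhdsWithin_of_eventually_nhds hε).mono fun ε hε x _ =>
        (hsym ε hε x).symm)).congr_right fun x _ => (hsym 0 h₀ x).symm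
  have hvar := integral_first_variation (m := m) hsol (hε.mono fun ε hε => (hu ε hε).1)
    (by rcases hm with rfl | rfl <;> norm_num)
    (hε.mono fun ε hε => by simpa using hqp ε hε 0)
    (hudiff.tendstoUniformlyOn_slope (hε.mono fun ε hε => (hu ε hε).1.continuousOn)
      hudot.continuousOn) hf₁u hf₂u hlam.hasDerivAt.ofReal_comp
  simp only [hsym 0 h₀] at hvar
  exact eq_re_integral_of_symmetric_variation (hsol.self_of_nhds.continuous_fst) hudot
    (hnorm 0 h₀) hvar

/-- Perturbation formula for a simple periodic/antiperiodic eigenvalue of the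
Zakharov–Shabat operator: if a differentiable family of normalized symmetric
quasiperiodic eigenfunction data is given, then the derivative of the
eigenvalue at `ε = 0` equals `Re ∫₀¹ conj(u̇) · (i f₁²) dx`, i.e. the gradient
of `λ` with respect to `conj u` is `i f₁²`. -/
theorem zakharov_shabat_eigenvalue_gradient
    (m : ℂ) (hm : m = 1 ∨ m = -1) (δ : ℝ) (hδ : 0 < δ)
    (u : ℝ → ℝ → ℂ) (lam : ℝ → ℝ) (f₁ f₂ : ℝ → ℝ → ℂ)
    (hu : ∀ ε ∈ Set.Ioo (-δ) δ, Continuous (u ε) ∧ Function.Periodic (u ε) 1)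
    (hf : ∀ ε ∈ Set.Ioo (-δ) δ, ContDiff ℝ 1 (f₁ ε) ∧ ContDiff ℝ 1 (f₂ ε))
    (hode₁ : ∀ ε ∈ Set.Ioo (-δ) δ, ∀ x,
      deriv (f₁ ε) x - u ε x * f₂ ε x = -Complex.I * (lam ε : ℂ) * f₁ ε x)
    (hode₂ : ∀ ε ∈ Set.Ioo (-δ) δ, ∀ x,
      deriv (f₂ ε) x - (starRingEnd ℂ) (u ε x) * f₁ ε x
        = Complex.I * (lam ε : ℂ) * f₂ ε x)
    (hqp : ∀ ε ∈ Set.Ioo (-δ) δ, ∀ x,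
      f₁ ε (x + 1) = m * f₁ ε x ∧ f₂ ε (x + 1) = m * f₂ ε x)
    (hsym : ∀ ε ∈ Set.Ioo (-δ) δ, ∀ x, f₂ ε x = (starRingEnd ℂ) (f₁ ε x))
    (hnorm : ∀ ε ∈ Set.Ioo (-δ) δ, (∫ x in (0:ℝ)..1, ‖f₁ ε x‖ ^ 2) = 1)
    (udot f₁dot f₂dot : ℝ → ℂ)
    (hudot : Continuous udot) (hf₁dot : Continuous f₁dot)
    (hf₂dot : Continuous f₂dot)
    (hudiff : HasSupNormDerivOnIccAtZero u udot)
    (hf₁diff : HasSupNormDerivOnIccAtZero f₁ f₁dot)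
    (hf₂diff : HasSupNormDerivOnIccAtZero f₂ f₂dot)
    (hlam : DifferentiableAt ℝ lam 0) :
    deriv lam 0
      = (∫ x in (0:ℝ)..1,
          (starRingEnd ℂ) (udot x) * (Complex.I * (f₁ 0 x) ^ 2)).re :=
  zakharov_shabat_eigenvalue_gradient_general m hm δ hδ u lam f₁ f₂ hu hf hode₁ hode₂ hqp hsym hnorm
    udot f₁dot hudot hf₁dot hudiff hf₁diff hlam
end

section
/- Let u : ℝ → ℂ be continuously differentiable and 1-periodic, and let A, B ≥ 0. Suppose ∫₀¹ |u(x)|² dx ≤ A and ∫₀¹ |u'(x)|² dx ≤ B + ∫₀¹ |u(x)|⁴ dx. Then ∫₀¹ |u'(x)|² dx ≤ 2B + 2A² + 4A³. -/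
/-!
Let `y` be a minimum point of `‖u‖²` on `[0, 1]`, so that `‖u y‖² ≤ ∫ ‖u‖²`. The fundamental
theorem of calculus and Young's inequality `2 ‖u‖ ‖u'‖ ≤ ε⁻¹ ‖u‖² + ε ‖u'‖²` give
`sup ‖u‖² ≤ (1 + ε⁻¹) ∫ ‖u‖² + ε ∫ ‖u'‖²`, hence `∫ ‖u‖⁴ ≤ sup ‖u‖² · ∫ ‖u‖²`. With `ε = 1 / (2A)`
the energy inequality becomes `∫ ‖u'‖² ≤ B + A² + 2A³ + ½ ∫ ‖u'‖²`.
-/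

open MeasureTheory Set intervalIntegral
open scoped RealInnerProductSpace

theorem abs_sub_le_integral_abs_deriv {g g' : ℝ → ℝ} {a b x y : ℝ}
    (hg : ∀ t, HasDerivAt g (g' t) t) (hg' : IntervalIntegrable g' volume a b)
    (hx : x ∈ Icc a b) (hy : y ∈ Icc a b) :
    |g x - g y| ≤ ∫ t in a..b, |g' t| := by
  have hsub : uIcc y x ⊆ uIcc a b := uIcc_subset_uIcc (Icc_subset_uIcc hy) (Icc_subset_uIcc hx)
  rw [← integral_eq_sub_of_hasDerivAt (fun t _ => hg t) (hg'.mono_set hsub)]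
  calc |(∫ t in y..x, g' t)|
    _ ≤ |(∫ t in y..x, |g' t|)| := by
      simpa only [Real.norm_eq_abs] using norm_integral_le_abs_integral_norm (f := g')
    _ ≤ |(∫ t in a..b, |g' t|)| :=
      abs_integral_mono_interval (uIoc_subset_uIoc_of_uIcc_subset_uIcc hsub)
        (ae_of_all _ fun _ => abs_nonneg _) hg'.abs
    _ = ∫ t in a..b, |g' t| :=
      abs_of_nonneg (integral_nonneg (hx.1.trans hx.2) fun _ _ => abs_nonneg _)

theorem mul_le_integral_add_mul_integral_abs_deriv {g g' : ℝ → ℝ} {a b x : ℝ}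
    (hg : ∀ t, HasDerivAt g (g' t) t) (hg' : IntervalIntegrable g' volume a b)
    (hx : x ∈ Icc a b) :
    (b - a) * g x ≤ (∫ t in a..b, g t) + (b - a) * ∫ t in a..b, |g' t| := by
  have hab : a ≤ b := hx.1.trans hx.2
  have hgc : Continuous g := continuous_iff_continuousAt.2 fun t => (hg t).continuousAt
  obtain ⟨y, hy, hymin⟩ := isCompact_Icc.exists_isMinOn ⟨x, hx⟩ hgc.continuousOn
  have hmean : (b - a) * g y ≤ ∫ t in a..b, g t := by
    simpa using integral_mono_on hab (intervalIntegrable_const (μ := volume))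
      (hgc.intervalIntegrable a b) fun t ht => hymin ht
  have hosc : g x ≤ g y + ∫ t in a..b, |g' t| := by
    linarith [le_abs_self (g x - g y), abs_sub_le_integral_abs_deriv hg hg' hx hy]
  nlinarith [mul_le_mul_of_nonneg_left hosc (sub_nonneg.2 hab)]

section InnerProductSpace

variable {E : Type*} [NormedAddCommGroup E] [InnerProductSpace ℝ E]

theorem sq_norm_le_integral_add_integral_deriv {u : ℝ → E} (hu : ContDiff ℝ 1 u) {ε : ℝ}
    (hε : 0 < ε) {x : ℝ} (hx : x ∈ Icc (0 : ℝ) 1) :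
    ‖u x‖ ^ 2 ≤ (1 + ε⁻¹) * (∫ t in (0 : ℝ)..1, ‖u t‖ ^ 2)
      + ε * ∫ t in (0 : ℝ)..1, ‖deriv u t‖ ^ 2 := by
  have hcu := hu.continuous
  have hcu' := hu.continuous_deriv le_rfl
  have hg : ∀ t, HasDerivAt (‖u ·‖ ^ 2) (2 * ⟪u t, deriv u t⟫) t := fun t =>
    ((hu.differentiable one_ne_zero t).hasDerivAt).norm_sq
  have hg' : Continuous fun t => 2 * ⟪u t, deriv u t⟫ := by fun_prop
  have hyoung : ∀ t, |2 * ⟪u t, deriv u t⟫| ≤ ε * ‖deriv u t‖ ^ 2 + ε⁻¹ * ‖u t‖ ^ 2 := by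
    intro t
    calc |2 * ⟪u t, deriv u t⟫| ≤ 2 * ‖deriv u t‖ * ‖u t‖ := by
          rw [abs_mul, abs_two, mul_assoc, mul_comm ‖deriv u t‖]
          gcongr
          exact abs_real_inner_le_norm _ _
      _ ≤ ε * ‖deriv u t‖ ^ 2 + ε⁻¹ * ‖u t‖ ^ 2 := two_mul_le_add_mul_sq hε
  have hderiv : (∫ t in (0 : ℝ)..1, |2 * ⟪u t, deriv u t⟫|)
      ≤ ε * (∫ t in (0 : ℝ)..1, ‖deriv u t‖ ^ 2) + ε⁻¹ * ∫ t in (0 : ℝ)..1, ‖u t‖ ^ 2 := by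
    rw [← intervalIntegral.integral_const_mul, ← intervalIntegral.integral_const_mul,
      ← intervalIntegral.integral_add]
    · exact integral_mono_on zero_le_one (hg'.abs.intervalIntegrable 0 1)
        (Continuous.intervalIntegrable (by fun_prop) _ _) fun t _ => hyoung t
    all_goals exact Continuous.intervalIntegrable (by fun_prop) _ _
  have := mul_le_integral_add_mul_integral_abs_deriv hg (hg'.intervalIntegrable 0 1) hx
  simp only [sub_zero, one_mul] at this
  linarith

theorem integral_norm_pow_four_le {u : ℝ → E} (hu : ContDiff ℝ 1 u) {ε : ℝ} (hε : 0 < ε) :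
    ∫ t in (0 : ℝ)..1, ‖u t‖ ^ 4 ≤
      ((1 + ε⁻¹) * (∫ t in (0 : ℝ)..1, ‖u t‖ ^ 2) + ε * ∫ t in (0 : ℝ)..1, ‖deriv u t‖ ^ 2)
        * ∫ t in (0 : ℝ)..1, ‖u t‖ ^ 2 := by
  set C := (1 + ε⁻¹) * (∫ t in (0 : ℝ)..1, ‖u t‖ ^ 2) + ε * ∫ t in (0 : ℝ)..1, ‖deriv u t‖ ^ 2
  have hcu := hu.continuous
  rw [← intervalIntegral.integral_const_mul]
  refine integral_mono_on zero_le_one (Continuous.intervalIntegrable (by fun_prop) _ _)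
    (Continuous.intervalIntegrable (by fun_prop) _ _) fun t ht => ?_
  calc ‖u t‖ ^ 4 = ‖u t‖ ^ 2 * ‖u t‖ ^ 2 := by ring
    _ ≤ C * ‖u t‖ ^ 2 := by gcongr; exact sq_norm_le_integral_add_integral_deriv hu hε ht

end InnerProductSpace

theorem periodic_H1_apriori_bound_general
    (u : ℝ → ℂ) (hu : ContDiff ℝ 1 u)
    (A B : ℝ) (hA : 0 ≤ A)
    (h1 : (∫ x in (0:ℝ)..1, ‖u x‖ ^ 2) ≤ A)
    (h2 : (∫ x in (0:ℝ)..1, ‖deriv u x‖ ^ 2)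
        ≤ B + ∫ x in (0:ℝ)..1, ‖u x‖ ^ 4) :
    (∫ x in (0:ℝ)..1, ‖deriv u x‖ ^ 2) ≤ 2 * B + 2 * A ^ 2 + 4 * A ^ 3 := by
  set I := ∫ x in (0:ℝ)..1, ‖u x‖ ^ 2
  set E := ∫ x in (0:ℝ)..1, ‖deriv u x‖ ^ 2
  have hI : 0 ≤ I := integral_nonneg zero_le_one fun _ _ => by positivity
  have hE : 0 ≤ E := integral_nonneg zero_le_one fun _ _ => by positivity
  have hquartic : ∀ ε > 0, ∫ x in (0:ℝ)..1, ‖u x‖ ^ 4 ≤ ((1 + ε⁻¹) * I + ε * E) * I :=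
    fun _ hε => integral_norm_pow_four_le hu hε
  rcases hA.eq_or_lt with rfl | hA
  · have hI0 : I = 0 := le_antisymm h1 hI
    have := hquartic 1 one_pos
    rw [hI0, mul_zero] at this
    linarith
  · have hquartic := hquartic (2 * A)⁻¹ (by positivity)
    rw [inv_inv] at hquartic
    have hmono : ((1 + 2 * A) * I + (2 * A)⁻¹ * E) * I
        ≤ ((1 + 2 * A) * A + (2 * A)⁻¹ * E) * A := by
      gcongr
    have hbound_eq : ((1 + 2 * A) * A + (2 * A)⁻¹ * E) * A = A ^ 2 + 2 * A ^ 3 + E / 2 := by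
      field_simp
    linarith

/-- A priori `H¹` bound: if a `C¹` 1-periodic function has `L²` norm squared
at most `A` and its derivative satisfies the energy inequality
`∫|u'|² ≤ B + ∫|u|⁴`, then `∫|u'|² ≤ 2B + 2A² + 4A³`. -/
theorem periodic_H1_apriori_bound
    (u : ℝ → ℂ) (hu : ContDiff ℝ 1 u) (hper : Function.Periodic u 1)
    (A B : ℝ) (hA : 0 ≤ A) (hB : 0 ≤ B)
    (h1 : (∫ x in (0:ℝ)..1, ‖u x‖ ^ 2) ≤ A)
    (h2 : (∫ x in (0:ℝ)..1, ‖deriv u x‖ ^ 2)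
        ≤ B + ∫ x in (0:ℝ)..1, ‖u x‖ ^ 4) :
    (∫ x in (0:ℝ)..1, ‖deriv u x‖ ^ 2) ≤ 2 * B + 2 * A ^ 2 + 4 * A ^ 3 :=
  periodic_H1_apriori_bound_general u hu A B hA h1 h2
end

section
/- Let u : ℝ → ℂ be twice continuously differentiable and 1-periodic, and let A, B, C ≥ 0. Suppose ∫₀¹ |u(x)|² dx ≤ A, ∫₀¹ |u'(x)|² dx ≤ B, and ∫₀¹ ( |u''(x)|² + (1/2)|u(x)|⁶ − (1/2)((d/dx)|u(x)|²)² − 3|u'(x)|²·|u(x)|² ) dx ≤ C. Then ∫₀¹ |u''(x)|² dx ≤ C + 5·(A + 2·√(A·B))·B. -/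
/-!
Write `f = ‖u‖²`. Since `|f'| ≤ 2‖u‖‖u'‖`, Cauchy–Schwarz bounds the total variation of `f` on
`[0,1]` by `2√(AB)`, and its minimum there by its mean, at most `A`; hence `‖u‖² ≤ M := A + 2√(AB)`
on `[0,1]`. The lower-order terms of `I₅` then satisfy
`½ f'² + 3‖u'‖²‖u‖² - ½‖u‖⁶ ≤ 5 ‖u‖²‖u'‖² ≤ 5 M ‖u'‖²`, whose integral is at most `5 M B`.
-/

open MeasureTheory Set

theorem intervalIntegral_mul_le_sqrt_mul_sqrt {f g : ℝ → ℝ} {a b : ℝ} (hab : a ≤ b)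
    (hf : Continuous f) (hg : Continuous g) (hf₀ : 0 ≤ f) (hg₀ : 0 ≤ g) :
    ∫ x in a..b, f x * g x ≤ √(∫ x in a..b, f x ^ 2) * √(∫ x in a..b, g x ^ 2) := by
  have memLp_two {h : ℝ → ℝ} (hh : Continuous h) :
      MemLp h (ENNReal.ofReal 2) (volume.restrict (Ioc a b)) := by
    rw [ENNReal.ofReal_ofNat, memLp_two_iff_integrable_sq hh.aestronglyMeasurable]
    exact (hh.pow 2).integrableOn_Ioc
  have holder := integral_mul_le_Lp_mul_Lq_of_nonneg (μ := volume.restrict (Ioc a b))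
    Real.HolderConjugate.two_two (Filter.Eventually.of_forall hf₀)
    (Filter.Eventually.of_forall hg₀) (memLp_two hf) (memLp_two hg)
  simp only [Real.rpow_two, ← Real.sqrt_eq_rpow] at holder
  simpa only [intervalIntegral.integral_of_le hab] using holder

theorem norm_intervalIntegral_le_of_uIoc_subset {E : Type*} [NormedAddCommGroup E]
    [NormedSpace ℝ E] {f : ℝ → E} {a b c d : ℝ} (hcd : c ≤ d) (hsub : uIoc a b ⊆ Ioc c d)
    (hf : Continuous f) :
    ‖∫ x in a..b, f x‖ ≤ ∫ x in c..d, ‖f x‖ := by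
  calc ‖∫ x in a..b, f x‖ ≤ |∫ x in a..b, ‖f x‖| :=
        intervalIntegral.norm_integral_le_abs_integral_norm
    _ ≤ |∫ x in c..d, ‖f x‖| := by
        refine intervalIntegral.abs_integral_mono_interval (by rwa [uIoc_of_le hcd])
          (Filter.Eventually.of_forall fun x => norm_nonneg (f x)) (hf.norm.intervalIntegrable c d)
    _ = ∫ x in c..d, ‖f x‖ :=
        abs_of_nonneg (intervalIntegral.integral_nonneg hcd fun x _ => norm_nonneg (f x))

theorem mul_le_integral_add_mul_integral_norm_deriv {f f' : ℝ → ℝ} {a b x : ℝ}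
    (hf : ∀ y, HasDerivAt f (f' y) y) (hf' : Continuous f') (hx : x ∈ Icc a b) :
    (b - a) * f x ≤ (∫ y in a..b, f y) + (b - a) * ∫ y in a..b, ‖f' y‖ := by
  have hab : a ≤ b := hx.1.trans hx.2
  have hfc : Continuous f := continuous_iff_continuousAt.2 fun y => (hf y).continuousAt
  obtain ⟨y₀, hy₀, hmin⟩ := isCompact_Icc.exists_isMinOn (nonempty_Icc.2 hab) hfc.continuousOn
  have h_mean : (b - a) * f y₀ ≤ ∫ y in a..b, f y := by
    simpa [mul_comm] using intervalIntegral.integral_mono_on (μ := volume) hab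
      intervalIntegrable_const (hfc.intervalIntegrable a b) fun y hy => hmin hy
  have h_ftc : ∫ y in y₀..x, f' y = f x - f y₀ :=
    intervalIntegral.integral_eq_sub_of_hasDerivAt (fun y _ => hf y) (hf'.intervalIntegrable y₀ x)
  have hsub : uIoc y₀ x ⊆ Ioc a b := fun y ⟨hy₁, hy₂⟩ =>
    ⟨lt_of_le_of_lt (le_min hy₀.1 hx.1) hy₁, hy₂.trans (max_le hy₀.2 hx.2)⟩
  have h_var : f x - f y₀ ≤ ∫ y in a..b, ‖f' y‖ :=
    h_ftc ▸ (le_abs_self _).trans (norm_intervalIntegral_le_of_uIoc_subset hab hsub hf')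
  nlinarith [sub_nonneg.2 hab]

theorem abs_deriv_norm_sq_le {F : Type*} [NormedAddCommGroup F] [InnerProductSpace ℝ F]
    {u : ℝ → F} {x : ℝ} (hu : DifferentiableAt ℝ u x) :
    |deriv (fun y => ‖u y‖ ^ 2) x| ≤ 2 * (‖u x‖ * ‖deriv u x‖) := by
  rw [hu.hasDerivAt.norm_sq.deriv, abs_mul, abs_two]
  exact mul_le_mul_of_nonneg_left (abs_real_inner_le_norm _ _) zero_le_two

theorem sq_norm_le_of_integral_sq_norm_le {F : Type*} [NormedAddCommGroup F]
    [InnerProductSpace ℝ F] {u : ℝ → F} (hu : ContDiff ℝ 1 u) {A B : ℝ}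
    (hA : ∫ x in (0:ℝ)..1, ‖u x‖ ^ 2 ≤ A) (hB : ∫ x in (0:ℝ)..1, ‖deriv u x‖ ^ 2 ≤ B)
    {x : ℝ} (hx : x ∈ Icc (0:ℝ) 1) :
    ‖u x‖ ^ 2 ≤ A + 2 * √(A * B) := by
  have hud : Differentiable ℝ u := hu.differentiable one_ne_zero
  have hcu : Continuous u := hu.continuous
  have hcu' : Continuous (deriv u) := hu.continuous_deriv_one
  have hA₀ : 0 ≤ A := (intervalIntegral.integral_nonneg zero_le_one fun y _ => by positivity).trans hA
  have h_var : ∫ y in (0:ℝ)..1, ‖deriv (fun y => ‖u y‖ ^ 2) y‖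
      ≤ 2 * ∫ y in (0:ℝ)..1, ‖u y‖ * ‖deriv u y‖ := by
    rw [← intervalIntegral.integral_const_mul]
    exact intervalIntegral.integral_mono_on zero_le_one
      ((hu.norm_sq ℝ).continuous_deriv_one.norm.intervalIntegrable 0 1)
      ((continuous_const.mul (hcu.norm.mul hcu'.norm)).intervalIntegrable 0 1)
      fun y _ => abs_deriv_norm_sq_le (hud y)
  have h_cs : ∫ y in (0:ℝ)..1, ‖u y‖ * ‖deriv u y‖ ≤ √(A * B) := by
    calc _ ≤ √(∫ y in (0:ℝ)..1, ‖u y‖ ^ 2) * √(∫ y in (0:ℝ)..1, ‖deriv u y‖ ^ 2) :=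
          intervalIntegral_mul_le_sqrt_mul_sqrt zero_le_one hcu.norm hcu'.norm
            (fun y => norm_nonneg _) (fun y => norm_nonneg _)
      _ ≤ √A * √B := by gcongr
      _ = √(A * B) := (Real.sqrt_mul hA₀ B).symm
  have h_pt := mul_le_integral_add_mul_integral_norm_deriv
    (fun y => ((hu.norm_sq ℝ).differentiable one_ne_zero y).hasDerivAt)
    (hu.norm_sq ℝ).continuous_deriv_one hx
  simp only [sub_zero, one_mul] at h_pt
  linarith

theorem half_sq_add_three_mul_le {a b d M : ℝ} (hd : |d| ≤ 2 * (a * b)) (hM : a ^ 2 ≤ M) :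
    1 / 2 * d ^ 2 + 3 * b ^ 2 * a ^ 2 ≤ 5 * M * b ^ 2 := by
  have hd2 : d ^ 2 ≤ 4 * (a ^ 2 * b ^ 2) := by
    nlinarith [sq_abs d, abs_nonneg d]
  nlinarith [sq_nonneg b]

theorem intervalIntegral_le_add_mul_of_le {f g h : ℝ → ℝ} {a b c C B : ℝ} (hab : a ≤ b)
    (hf : Continuous f) (hg : Continuous g) (hh : Continuous h)
    (hfgh : ∀ x ∈ Icc a b, f x ≤ g x + c * h x) (hc : 0 ≤ c)
    (hgC : ∫ x in a..b, g x ≤ C) (hhB : ∫ x in a..b, h x ≤ B) :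
    ∫ x in a..b, f x ≤ C + c * B :=
  calc ∫ x in a..b, f x ≤ ∫ x in a..b, (g x + c * h x) :=
        intervalIntegral.integral_mono_on hab (hf.intervalIntegrable a b)
          ((hg.intervalIntegrable a b).add ((hh.intervalIntegrable a b).const_mul c)) hfgh
    _ = (∫ x in a..b, g x) + c * ∫ x in a..b, h x := by
        rw [intervalIntegral.integral_add (hg.intervalIntegrable a b)
          ((hh.intervalIntegrable a b).const_mul c), intervalIntegral.integral_const_mul]
    _ ≤ C + c * B := by gcongr

theorem periodic_H2_apriori_bound_general
    (u : ℝ → ℂ) (hu : ContDiff ℝ 2 u)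
    (A B C : ℝ)
    (h1 : (∫ x in (0:ℝ)..1, ‖u x‖ ^ 2) ≤ A)
    (h2 : (∫ x in (0:ℝ)..1, ‖deriv u x‖ ^ 2) ≤ B)
    (h3 : (∫ x in (0:ℝ)..1,
        (‖deriv (deriv u) x‖ ^ 2 + (1 / 2) * ‖u x‖ ^ 6
          - (1 / 2) * (deriv (fun y => ‖u y‖ ^ 2) x) ^ 2
          - 3 * ‖deriv u x‖ ^ 2 * ‖u x‖ ^ 2)) ≤ C) :
    (∫ x in (0:ℝ)..1, ‖deriv (deriv u) x‖ ^ 2)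
      ≤ C + 5 * (A + 2 * Real.sqrt (A * B)) * B := by
  have hu₁ : ContDiff ℝ 1 u := hu.of_le one_le_two
  have hu' : Continuous (deriv u) := hu₁.continuous_deriv_one
  have hu'' : Continuous (deriv (deriv u)) := (hu.deriv' (n := 1)).continuous_deriv_one
  have h_sup : ∀ x ∈ Icc (0:ℝ) 1, ‖u x‖ ^ 2 ≤ A + 2 * √(A * B) := fun x hx =>
    sq_norm_le_of_integral_sq_norm_le hu₁ h1 h2 hx
  refine intervalIntegral_le_add_mul_of_le zero_le_one (by fun_prop) ?_ (by fun_prop)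
    (fun x hx => ?_) (by linarith [h_sup 0 (left_mem_Icc.2 zero_le_one), sq_nonneg ‖u 0‖]) h3 h2
  · have hu₀ : Continuous u := hu.continuous
    have hf' : Continuous (deriv fun y => ‖u y‖ ^ 2) := (hu₁.norm_sq ℝ).continuous_deriv_one
    fun_prop
  · nlinarith [half_sq_add_three_mul_le (abs_deriv_norm_sq_le (hu₁.differentiable one_ne_zero x))
      (h_sup x hx), pow_nonneg (norm_nonneg (u x)) 6]

/-- A priori `H²` bound derived from the conserved functional `I₅` of the
periodic nonlinear Schrödinger equation. -/
theorem periodic_H2_apriori_bound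
    (u : ℝ → ℂ) (hu : ContDiff ℝ 2 u) (hper : Function.Periodic u 1)
    (A B C : ℝ) (hA : 0 ≤ A) (hB : 0 ≤ B) (hC : 0 ≤ C)
    (h1 : (∫ x in (0:ℝ)..1, ‖u x‖ ^ 2) ≤ A)
    (h2 : (∫ x in (0:ℝ)..1, ‖deriv u x‖ ^ 2) ≤ B)
    (h3 : (∫ x in (0:ℝ)..1,
        (‖deriv (deriv u) x‖ ^ 2 + (1 / 2) * ‖u x‖ ^ 6
          - (1 / 2) * (deriv (fun y => ‖u y‖ ^ 2) x) ^ 2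
          - 3 * ‖deriv u x‖ ^ 2 * ‖u x‖ ^ 2)) ≤ C) :
    (∫ x in (0:ℝ)..1, ‖deriv (deriv u) x‖ ^ 2)
      ≤ C + 5 * (A + 2 * Real.sqrt (A * B)) * B :=
  periodic_H2_apriori_bound_general u hu A B C h1 h2 h3
end
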